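/- arXiv:1604.08144 — 5 statements merged into one kernel-verified Lean document; each statement's English description precedes it below -/
import Mathlib

section
/- Let G be a graph with infinite edge motion, let γ be a non-trivial automorphism of G, and let v be a vertex moved by γ such that every vertex in the connected component of v in the subgraph induced by the vertices moved by γ has finite degree in G. Then there is a ray (a one-way infinite path) in G starting at v all of whose vertices are moved by γ. -/
/-!
Let `C` be the component of `v` in the subgraph induced by the vertices moved by `γ`.
Since `γ` permutes these components, `γ '' C` is either `C` or disjoint from `C`. If `C` were
finite, the map that is `γ` on `C`, `γ⁻¹` on `γ '' C \ C` and the identity elsewhere would be a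
non-trivial automorphism moving only the finitely many edges at `C ∪ γ '' C`, contradicting
infinite edge motion. So `C` is infinite and locally finite, and König's lemma yields a ray in
`C` from `v`.
-/

theorem exists_seq_of_forall_exists {α : Type*} {P : α → Prop} {R : α → α → Prop}
    (h : ∀ a, P a → ∃ b, R a b ∧ P b) {a : α} (ha : P a) :
    ∃ f : ℕ → α, f 0 = a ∧ ∀ n, P (f n) ∧ R (f n) (f (n + 1)) := by
  choose! next hR hP using h
  have hPn : ∀ n, P (next^[n] a) := fun n => by
    induction n with
    | zero => exact ha
    | succ n ih => rw [Function.iterate_succ_apply']; exact hP _ ih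
  refine ⟨fun n => next^[n] a, rfl, fun n => ⟨hPn n, ?_⟩⟩
  simpa only [Function.iterate_succ_apply'] using hR _ (hPn n)

namespace SimpleGraph

variable {W : Type*} {H : SimpleGraph W}

def reachSetAvoiding (H : SimpleGraph W) (L : Set W) (x : W) : Set W :=
  {w | ∃ p : H.Walk x w, ∀ y ∈ p.support, y ∉ L}

lemma notMem_of_mem_reachSetAvoiding {L : Set W} {x w : W} (hw : w ∈ H.reachSetAvoiding L x) :
    x ∉ L := by
  obtain ⟨p, hp⟩ := hw
  exact hp x p.start_mem_support

@[simp]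
lemma reachSetAvoiding_empty (x : W) : H.reachSetAvoiding ∅ x = {w | H.Reachable x w} :=
  Set.ext fun _ => ⟨fun ⟨p, _⟩ => ⟨p⟩, fun ⟨p⟩ => ⟨p, fun _ _ => id⟩⟩

lemma reachSetAvoiding_subset (L : Set W) (x : W) :
    H.reachSetAvoiding L x ⊆
      insert x (⋃ u ∈ H.neighborSet x, H.reachSetAvoiding (insert x L) u) := by
  classical
  rintro w ⟨p, hp⟩
  cases hq : p.bypass with
  | nil => exact Set.mem_insert _ _
  | @cons _ u _ hxu q =>
    have hpath := p.bypass_isPath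
    rw [hq, Walk.cons_isPath_iff] at hpath
    have hsupp : ∀ y ∈ q.support, y ∈ p.support := fun y hy =>
      p.support_bypass_subset_support <| by
        rw [hq, Walk.support_cons]; exact List.mem_cons_of_mem _ hy
    refine Set.mem_insert_of_mem _ (Set.mem_biUnion hxu ⟨q, fun y hy => ?_⟩)
    rintro (rfl | hyL)
    · exact hpath.2 hy
    · exact hp y (hsupp y hy) hyL

lemma exists_adj_infinite_reachSetAvoiding {L : Set W} {x : W}
    (hx : (H.neighborSet x).Finite) (hinf : (H.reachSetAvoiding L x).Infinite) :
    ∃ u, H.Adj x u ∧ (H.reachSetAvoiding (insert x L) u).Infinite := by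
  by_contra! hfin
  exact hinf (((hx.biUnion hfin).insert x).subset (reachSetAvoiding_subset L x))

theorem exists_ray_of_infinite_reachable (a : W)
    (hfin : ∀ w, H.Reachable a w → (H.neighborSet w).Finite)
    (hinf : {w | H.Reachable a w}.Infinite) :
    ∃ f : ℕ → W, Function.Injective f ∧ f 0 = a ∧ ∀ n, H.Adj (f n) (f (n + 1)) := by
  -- A state is the current vertex together with the set of vertices visited before it.
  obtain ⟨s, hs0, hs⟩ := exists_seq_of_forall_exists
    (P := fun s : W × Set W => H.Reachable a s.1 ∧ (H.reachSetAvoiding s.2 s.1).Infinite)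
    (R := fun s t => H.Adj s.1 t.1 ∧ t.2 = insert s.1 s.2)
    (by
      rintro s ⟨hreach, hs⟩
      obtain ⟨u, hxu, hu⟩ := exists_adj_infinite_reachSetAvoiding (hfin _ hreach) hs
      exact ⟨(u, insert s.1 s.2), ⟨hxu, rfl⟩, hreach.trans hxu.reachable, hu⟩)
    (a := (a, ∅)) ⟨Reachable.refl a, by rwa [reachSetAvoiding_empty]⟩
  have hvisited : ∀ m n, m < n → (s m).1 ∈ (s n).2 := by
    intro m n hmn
    induction n with
    | zero => omega
    | succ n ih =>
      rw [(hs n).2.2]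
      rcases Nat.lt_succ_iff_lt_or_eq.mp hmn with hlt | rfl
      · exact Set.mem_insert_of_mem _ (ih hlt)
      · exact Set.mem_insert _ _
  have hfresh : ∀ n, (s n).1 ∉ (s n).2 := fun n =>
    notMem_of_mem_reachSetAvoiding (hs n).1.2.nonempty.some_mem
  refine ⟨fun n => (s n).1, Function.Injective.of_lt_imp_ne fun m n hmn heq => ?_,
    congrArg Prod.fst hs0, fun n => (hs n).2.1⟩
  exact hfresh n (heq ▸ hvisited m n hmn)

variable {V : Type*} {G : SimpleGraph V}

namespace Iso

lemma symm_image_image (γ : G ≃g G) (C : Set V) : γ.symm '' (γ '' C) = C :=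
  γ.toEquiv.symm_image_image C

theorem finite_setOf_map_ne (σ : G ≃g G) {S : Set V} (hS : S.Finite)
    (hdeg : ∀ x ∈ S, (G.neighborSet x).Finite) (hfix : ∀ x ∉ S, σ x = x) :
    {e : Sym2 V | e ∈ G.edgeSet ∧ e.map σ ≠ e}.Finite := by
  refine (hS.biUnion fun x hx => (hdeg x hx).image fun y => s(x, y)).subset ?_
  rintro e ⟨he, hne⟩
  induction e using Sym2.ind with | _ a b => ?_
  by_cases ha : a ∈ S
  · exact Set.mem_biUnion ha ⟨b, he, rfl⟩
  by_cases hb : b ∈ S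
  · exact Set.mem_biUnion hb ⟨a, G.adj_symm he, Sym2.eq_swap⟩
  exact absurd (by rw [Sym2.map_mk, hfix a ha, hfix b hb]) hne

theorem image_setOf_reachable {W : Type*} {G' : SimpleGraph W} (φ : G ≃g G') (u : V) :
    φ '' {w | G.Reachable u w} = {w | G'.Reachable (φ u) w} := by
  ext w
  refine ⟨?_, fun hw => ⟨φ.symm w, ?_, φ.apply_symm_apply w⟩⟩
  · rintro ⟨x, hx, rfl⟩
    exact φ.reachable_iff.mpr hx
  · rw [Set.mem_ofPred_eq, ← φ.reachable_iff, φ.apply_symm_apply]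
    exact hw

/-- For such a `C`, `γ` can be cut down to an automorphism supported on `C ∪ γ '' C`
(`IsMovedBlock.exists_iso`). -/
structure IsMovedBlock (γ : G ≃g G) (C : Set V) : Prop where
  apply_ne : ∀ x ∈ C, γ x ≠ x
  mem_of_adj : ∀ x ∈ C, ∀ y, G.Adj x y → γ y ≠ y → y ∈ C
  image_eq_or_disjoint : γ '' C = C ∨ Disjoint C (γ '' C)

open Classical in
noncomputable def localize (γ : G ≃g G) (C : Set V) (x : V) : V :=
  if x ∈ C then γ x else if x ∈ γ '' C then γ.symm x else x

variable {γ : G ≃g G} {C : Set V} {x y : V}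

lemma localize_of_mem (hx : x ∈ C) : γ.localize C x = γ x := if_pos hx

lemma localize_of_mem_image (hxC : x ∉ C) (hx : x ∈ γ '' C) : γ.localize C x = γ.symm x := by
  rw [localize, if_neg hxC, if_pos hx]

lemma localize_of_notMem (hxC : x ∉ C) (hx : x ∉ γ '' C) : γ.localize C x = x := by
  rw [localize, if_neg hxC, if_neg hx]

namespace IsMovedBlock

lemma image_apply_ne (hC : IsMovedBlock γ C) : ∀ x ∈ γ '' C, γ x ≠ x := by
  rintro _ ⟨c, hc, rfl⟩ h
  exact hC.apply_ne c hc (γ.injective h)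

lemma symm_image (hC : IsMovedBlock γ C) : IsMovedBlock γ.symm (γ '' C) where
  apply_ne := by
    rintro _ ⟨c, hc, rfl⟩ h
    rw [RelIso.symm_apply_apply] at h
    exact hC.apply_ne c hc h.symm
  mem_of_adj := by
    rintro _ ⟨c, hc, rfl⟩ y hcy hy
    refine ⟨γ.symm y, hC.mem_of_adj c hc _ ?_ ?_, RelIso.apply_symm_apply γ y⟩
    · rwa [← γ.map_adj_iff, RelIso.apply_symm_apply]
    · rw [RelIso.apply_symm_apply]; exact Ne.symm hy
  image_eq_or_disjoint := by
    rw [symm_image_image]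
    exact hC.image_eq_or_disjoint.imp Eq.symm fun h => h.symm

lemma localize_of_apply_eq (hC : IsMovedBlock γ C) (hx : γ x = x) : γ.localize C x = x :=
  localize_of_notMem (fun h => hC.apply_ne x h hx) (fun h => hC.image_apply_ne x h hx)

lemma disjoint_of_mem_image (hC : IsMovedBlock γ C) (hxC : x ∉ C) (hx : x ∈ γ '' C) :
    Disjoint C (γ '' C) :=
  hC.image_eq_or_disjoint.resolve_left fun h => hxC (h ▸ hx)

lemma localize_symm_localize (hC : IsMovedBlock γ C) (x : V) :
    γ.symm.localize (γ '' C) (γ.localize C x) = x := by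
  by_cases hxC : x ∈ C
  · rw [localize_of_mem hxC, localize_of_mem (Set.mem_image_of_mem γ hxC),
      RelIso.symm_apply_apply]
  by_cases hx : x ∈ γ '' C
  · have hy : γ.symm x ∈ C := by
      rw [← symm_image_image γ C]; exact Set.mem_image_of_mem _ hx
    have hy' : γ.symm x ∉ γ '' C := Set.disjoint_left.mp (hC.disjoint_of_mem_image hxC hx) hy
    rw [localize_of_mem_image hxC hx, localize_of_mem_image hy' (by rwa [symm_image_image])]
    exact γ.apply_symm_apply x
  · rw [localize_of_notMem hxC hx, localize_of_notMem hx (by rwa [symm_image_image])]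

lemma localize_eq_apply_of_adj (hC : IsMovedBlock γ C) (hx : x ∈ C) (hxy : G.Adj x y) :
    γ.localize C y = γ y := by
  by_cases hy : γ y = y
  · rw [hC.localize_of_apply_eq hy, hy]
  · exact localize_of_mem (hC.mem_of_adj x hx y hxy hy)

lemma localize_eq_symm_apply_of_adj (hC : IsMovedBlock γ C) (hxC : x ∉ C) (hx : x ∈ γ '' C)
    (hxy : G.Adj x y) : γ.localize C y = γ.symm y := by
  by_cases hy : γ y = y
  · rw [hC.localize_of_apply_eq hy, eq_comm, RelIso.symm_apply_eq, hy]
  · have hyD : y ∈ γ '' C := hC.symm_image.mem_of_adj x hx y hxy fun h => hy (by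
      rw [RelIso.symm_apply_eq] at h; exact h.symm)
    exact localize_of_mem_image
      (Set.disjoint_right.mp (hC.disjoint_of_mem_image hxC hx) hyD) hyD

lemma adj_localize_of_mem (hC : IsMovedBlock γ C) (hx : x ∈ C ∪ γ '' C) (hxy : G.Adj x y) :
    G.Adj (γ.localize C x) (γ.localize C y) := by
  by_cases hxC : x ∈ C
  · rw [localize_of_mem hxC, hC.localize_eq_apply_of_adj hxC hxy]
    exact γ.map_adj_iff.mpr hxy
  · have hxD := hx.resolve_left hxC
    rw [localize_of_mem_image hxC hxD, hC.localize_eq_symm_apply_of_adj hxC hxD hxy]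
    exact γ.symm.map_adj_iff.mpr hxy

lemma adj_localize (hC : IsMovedBlock γ C) (hxy : G.Adj x y) :
    G.Adj (γ.localize C x) (γ.localize C y) := by
  by_cases hx : x ∈ C ∪ γ '' C
  · exact hC.adj_localize_of_mem hx hxy
  by_cases hy : y ∈ C ∪ γ '' C
  · exact (hC.adj_localize_of_mem hy hxy.symm).symm
  rw [Set.mem_union, not_or] at hx hy
  rwa [localize_of_notMem hx.1 hx.2, localize_of_notMem hy.1 hy.2]

theorem exists_iso (hC : IsMovedBlock γ C) :
    ∃ σ : G ≃g G, (∀ x ∈ C, σ x = γ x) ∧ ∀ x, x ∉ C → x ∉ γ '' C → σ x = x := by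
  have hinv : ∀ x, γ.localize C (γ.symm.localize (γ '' C) x) = x := fun x => by
    simpa only [symm_image_image, RelIso.symm_symm] using
      hC.symm_image.localize_symm_localize x
  refine ⟨⟨⟨γ.localize C, γ.symm.localize (γ '' C), hC.localize_symm_localize, hinv⟩,
    fun {x y} => ⟨fun h => ?_, hC.adj_localize⟩⟩,
    fun x hx => localize_of_mem hx, fun x hxC hx => localize_of_notMem hxC hx⟩
  simpa only [hC.localize_symm_localize] using
    hC.symm_image.adj_localize (x := γ.localize C x) (y := γ.localize C y) h

end IsMovedBlock

theorem isMovedBlock_reachable (γ : G ≃g G) (a : {x | γ x ≠ x}) :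
    γ.IsMovedBlock (Subtype.val '' {w | (G.induce {x | γ x ≠ x}).Reachable a w}) where
  apply_ne := by
    rintro _ ⟨w, -, rfl⟩
    exact w.2
  mem_of_adj := by
    rintro _ ⟨w, hw, rfl⟩ y hwy hy
    exact ⟨⟨y, hy⟩, hw.trans (Adj.reachable (G := G.induce _) hwy), rfl⟩
  image_eq_or_disjoint := by
    let γM := γ.induce (γ.toEquiv.bijOn (s := {x | γ x ≠ x}) (t := {x | γ x ≠ x})
      fun _ => γ.injective.ne_iff)
    have himage : γ '' (Subtype.val '' {w | (G.induce {x | γ x ≠ x}).Reachable a w}) =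
        Subtype.val '' {w | (G.induce {x | γ x ≠ x}).Reachable (γM a) w} := by
      rw [← γM.image_setOf_reachable, Set.image_image, Set.image_image]
      rfl
    rw [himage]
    by_cases h : (G.induce {x | γ x ≠ x}).Reachable a (γM a)
    · left
      congr 1
      exact Set.ext fun w => ⟨h.trans, h.symm.trans⟩
    · right
      rw [Set.disjoint_image_iff Subtype.val_injective]
      exact Set.disjoint_left.mpr fun w hw hw' => h (hw.trans hw'.symm)

end Iso

theorem infinite_setOf_reachable_induce
    (hmotion : ∀ γ : G ≃g G, (∃ v, γ v ≠ v) →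
      {e : Sym2 V | e ∈ G.edgeSet ∧ e.map γ ≠ e}.Infinite)
    (γ : G ≃g G) (a : {x | γ x ≠ x})
    (hdeg : ∀ w, (G.induce {x | γ x ≠ x}).Reachable a w → (G.neighborSet w).Finite) :
    {w | (G.induce {x | γ x ≠ x}).Reachable a w}.Infinite := by
  intro hfin
  set C := Subtype.val '' {w | (G.induce {x | γ x ≠ x}).Reachable a w}
  have hC : C.Finite := hfin.image _
  have haC : (a : V) ∈ C := ⟨a, Reachable.refl _, rfl⟩
  obtain ⟨σ, hσC, hσfix⟩ := (γ.isMovedBlock_reachable a).exists_iso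
  have hCdeg : ∀ x ∈ C, (G.neighborSet x).Finite := by
    rintro _ ⟨w, hw, rfl⟩
    exact hdeg w hw
  refine hmotion σ ⟨a, by rw [hσC a haC]; exact a.2⟩
    (σ.finite_setOf_map_ne (hC.union (hC.image γ)) ?_
      fun x hx => hσfix x (fun h => hx (.inl h)) fun h => hx (.inr h))
  rintro x (hx | ⟨y, hy, rfl⟩)
  · exact hCdeg x hx
  · rw [← γ.image_neighborSet]
    exact (hCdeg y hy).image γ

end SimpleGraph

theorem stmt_1_general {V : Type} (G : SimpleGraph V)
    (hmotion : ∀ γ : G ≃g G, (∃ v, γ v ≠ v) →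
      {e : Sym2 V | e ∈ G.edgeSet ∧ e.map γ ≠ e}.Infinite)
    (γ : G ≃g G)
    (v : V) (hv : γ v ≠ v)
    (hfin : ∀ w : {x | γ x ≠ x},
      (G.induce {x | γ x ≠ x}).Reachable w ⟨v, hv⟩ →
      (G.neighborSet (w : V)).Finite) :
    ∃ f : ℕ → V, Function.Injective f ∧ f 0 = v ∧
      (∀ n, G.Adj (f n) (f (n + 1))) ∧ (∀ n, γ (f n) ≠ f n) := by
  have hdeg : ∀ w, (G.induce {x | γ x ≠ x}).Reachable ⟨v, hv⟩ w →
      (G.neighborSet w).Finite := fun w hw => hfin w hw.symm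
  obtain ⟨f, hf, hf0, hadj⟩ :=
    (G.induce {x | γ x ≠ x}).exists_ray_of_infinite_reachable ⟨v, hv⟩
    (fun w hw => (hdeg w hw).preimage Subtype.val_injective.injOn)
    (SimpleGraph.infinite_setOf_reachable_induce hmotion γ ⟨v, hv⟩ hdeg)
  exact ⟨fun n => f n, Subtype.val_injective.comp hf, congrArg Subtype.val hf0, hadj,
    fun n => (f n).2⟩

/-- If `G` has infinite edge motion, `γ` is a non-trivial automorphism,
`v` is a vertex moved by `γ` such that every vertex in the connected component of `v`
in the subgraph induced by the moved vertices has finite degree in `G`, then there is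
a ray in `G` starting at `v` all of whose vertices are moved by `γ`. -/
theorem stmt_1 {V : Type} (G : SimpleGraph V)
    (hmotion : ∀ γ : G ≃g G, (∃ v, γ v ≠ v) →
      {e : Sym2 V | e ∈ G.edgeSet ∧ e.map γ ≠ e}.Infinite)
    (γ : G ≃g G) (hnt : ∃ u, γ u ≠ u)
    (v : V) (hv : γ v ≠ v)
    (hfin : ∀ w : {x | γ x ≠ x},
      (G.induce {x | γ x ≠ x}).Reachable w ⟨v, hv⟩ →
      (G.neighborSet (w : V)).Finite) :
    ∃ f : ℕ → V, Function.Injective f ∧ f 0 = v ∧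
      (∀ n, G.Adj (f n) (f (n + 1))) ∧ (∀ n, γ (f n) ≠ f n) :=
  stmt_1_general G hmotion γ v hv hfin
end

section
/- Let G be a connected graph, let C be an abelian group, let c : V(G) → C be a distinguishing vertex colouring, and let c' be the canonical edge colouring defined by c'(uv) = c(u) + c(v). If γ is a non-trivial automorphism of G preserving c', then c(γ(v)) ≠ c(v) for every vertex v; in particular, γ has no fixed vertex. -/
/-- Let `G` be connected, `c` a distinguishing vertex colouring with values
in an abelian group `C`, and `c'` the canonical edge colouring `c'(uv) = c(u) + c(v)`.
If a non-trivial automorphism `γ` preserves `c'`, then `c(γ v) ≠ c v` for every vertex `v`;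
in particular `γ` has no fixed vertex. -/
theorem stmt_5 {V : Type} {C : Type} [AddCommGroup C]
    (G : SimpleGraph V) (hconn : G.Connected)
    (c : V → C)
    (hdist : ∀ γ : G ≃g G, (∀ v, c (γ v) = c v) → ∀ v, γ v = v)
    (γ : G ≃g G) (hnt : ∃ v, γ v ≠ v)
    (hpres : ∀ u v, G.Adj u v → c (γ u) + c (γ v) = c u + c v) :
    (∀ v, c (γ v) ≠ c v) ∧ (∀ v, γ v ≠ v) := by
  have key : ∀ {v w : V} (p : G.Walk v w), c (γ v) = c v → c (γ w) = c w := by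
    intro v w p
    induction p with
    | nil => exact id
    | cons h p ih =>
      intro hv
      apply ih
      have h2 := hpres _ _ h
      rw [hv] at h2
      exact add_left_cancel h2
  have main : ∀ v, c (γ v) ≠ c v := by
    intro v hv
    obtain ⟨v0, hv0⟩ := hnt
    exact hv0 (hdist γ (fun w => key (hconn v w).some hv) v0)
  exact ⟨main, fun v hfix => main v (by rw [hfix])⟩
end

section
/- Let G be a connected graph, let C be an abelian group, let c : V(G) → C be a distinguishing vertex colouring, and let c' be the canonical edge colouring defined by c'(uv) = c(u) + c(v). Then the stabiliser of c' in Aut G, i.e. the subgroup of automorphisms preserving c', has cardinality at most |C|. -/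
/-- Let `G` be connected, `c` a distinguishing vertex colouring with values
in an abelian group `C`, and `c'` the canonical edge colouring `c'(uv) = c(u) + c(v)`.
Then the stabiliser of `c'` in `Aut G` has cardinality at most `|C|`. -/
theorem stmt_6 {V : Type} {C : Type} [AddCommGroup C]
    (G : SimpleGraph V) (hconn : G.Connected)
    (c : V → C)
    (hdist : ∀ γ : G ≃g G, (∀ v, c (γ v) = c v) → ∀ v, γ v = v) :
    Cardinal.mk {γ : G ≃g G // ∀ u v, G.Adj u v → c (γ u) + c (γ v) = c u + c v}
      ≤ Cardinal.mk C := by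
  obtain ⟨v₀⟩ := hconn.nonempty
  apply Cardinal.mk_le_of_injective (f := fun γ => c (γ.1 v₀))
  rintro ⟨γ₁, h₁⟩ ⟨γ₂, h₂⟩ h
  simp only at h
  have step : ∀ v, c (γ₁ v) = c (γ₂ v) := by
    intro v
    obtain ⟨w⟩ := hconn v v₀
    induction w with
    | nil => exact h
    | @cons a b _ hadj w ih =>
      have e1 := h₁ a b hadj
      have e2 := h₂ a b hadj
      have hb : c (γ₁ b) = c (γ₂ b) := ih h
      have f1 : c (γ₁ a) = c a + c b - c (γ₁ b) := eq_sub_of_add_eq e1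
      have f2 : c (γ₂ a) = c a + c b - c (γ₂ b) := eq_sub_of_add_eq e2
      rw [f1, f2, hb]
  have key : ∀ x, c (γ₁ (γ₂.symm x)) = c x := by
    intro x
    rw [step (γ₂.symm x)]
    simp
  have := hdist (γ₂.symm.trans γ₁) key
  have heq : ∀ y, γ₁ y = γ₂ y := by
    intro y
    have := this (γ₂ y)
    simpa using this
  apply Subtype.ext
  ext y
  exact heq y
end

section
/- If G is a connected graph whose distinguishing number D(G) is infinite, then D'(G) ≤ D(G). -/
open Cardinal

/-- The distinguishing number `D(G)`: the least cardinal number of colours in a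
distinguishing vertex colouring of `G`. -/
noncomputable def distinguishingNumber {V : Type u} (G : SimpleGraph V) : Cardinal.{u} :=
  sInf {κ : Cardinal.{u} | ∃ (C : Type u) (c : V → C), #C = κ ∧
    ∀ γ : G ≃g G, (∀ v, c (γ v) = c v) → ∀ v, γ v = v}

/-- The distinguishing index `D'(G)`: the least cardinal number of colours in a
distinguishing edge colouring of `G`. -/
noncomputable def distinguishingIndex {V : Type u} (G : SimpleGraph V) : Cardinal.{u} :=
  sInf {κ : Cardinal.{u} | ∃ (C : Type u) (c : G.edgeSet → C), #C = κ ∧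
    ∀ γ : G ≃g G, (∀ e : G.edgeSet, c (γ.mapEdgeSet e) = c e) → ∀ v, γ v = v}

/-- If `G` is connected and `D(G)` is infinite, then `D'(G) ≤ D(G)`. -/
theorem stmt_8 {V : Type u} (G : SimpleGraph V) (hconn : G.Connected)
    (hinf : Cardinal.aleph0 ≤ distinguishingNumber G) :
    distinguishingIndex G ≤ distinguishingNumber G := by
  classical
  -- the trivial (injective) vertex colouring shows the defining set is nonempty
  have hVmem : #V ∈ {κ : Cardinal.{u} | ∃ (C : Type u) (c : V → C), #C = κ ∧
      ∀ γ : G ≃g G, (∀ v, c (γ v) = c v) → ∀ v, γ v = v} :=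
    ⟨V, id, rfl, fun γ h v => h v⟩
  have hne : {κ : Cardinal.{u} | ∃ (C : Type u) (c : V → C), #C = κ ∧
      ∀ γ : G ≃g G, (∀ v, c (γ v) = c v) → ∀ v, γ v = v}.Nonempty := ⟨#V, hVmem⟩
  -- the infimum is attained
  obtain ⟨C, c, hC, hdist⟩ := csInf_mem hne
  -- V is infinite
  have hDleV : distinguishingNumber G ≤ #V := csInf_le' hVmem
  haveI hVinf : Infinite V := Cardinal.infinite_iff.mpr (le_trans hinf hDleV)
  -- find a vertex with two distinct neighbours
  obtain ⟨v0, a, b, hva, hvb, hab⟩ :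
      ∃ v0 a b : V, G.Adj v0 a ∧ G.Adj v0 b ∧ a ≠ b := by
    by_contra hdeg
    push_neg at hdeg
    -- under bounded degree ≤ 1, every walk stays within one edge
    have walkLem : ∀ {p q : V} (_ : G.Walk p q), q = p ∨ G.Adj p q := by
      intro p q w
      induction w with
      | nil => exact Or.inl rfl
      | @cons p m q h t ih =>
        rcases ih with rfl | hadj
        · exact Or.inr h
        · exact Or.inl (hdeg m q p hadj h.symm)
    have x : V := Classical.arbitrary V
    obtain ⟨y, hy⟩ := Infinite.exists_notMem_finset ({x} : Finset V)
    obtain ⟨z, hz⟩ := Infinite.exists_notMem_finset ({x, y} : Finset V)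
    simp only [Finset.mem_singleton, Finset.mem_insert, not_or] at hy hz
    have hyx : G.Adj x y := by
      rcases walkLem (hconn x y).some with h | h
      · exact absurd h hy
      · exact h
    have hzx : G.Adj x z := by
      rcases walkLem (hconn x z).some with h | h
      · exact absurd h hz.1
      · exact h
    exact hz.2 (hdeg x z y hzx hyx)
  -- define the edge colouring
  set C' : Type u := C ⊕ Sym2 C with hC'
  let cE : G.edgeSet → C' := fun e =>
    if h : v0 ∈ e.1 then Sum.inl (c (Sym2.Mem.other h)) else Sum.inr (e.1.map c)
  have hpos : ∀ (e : G.edgeSet) (h : v0 ∈ e.1),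
      cE e = Sum.inl (c (Sym2.Mem.other h)) := fun e h => dif_pos h
  have hneg : ∀ (e : G.edgeSet), v0 ∉ e.1 → cE e = Sum.inr (e.1.map c) :=
    fun e h => dif_neg h
  -- the colouring cE is distinguishing
  have hdistE : ∀ γ : G ≃g G, (∀ e : G.edgeSet, cE (γ.mapEdgeSet e) = cE e) →
      ∀ v, γ v = v := by
    intro γ hpres
    -- step 1 : γ fixes v0
    have hγv0 : γ v0 = v0 := by
      by_contra hne0
      have key1 : ∀ w : V, G.Adj v0 w → γ w = v0 := by
        intro w hw
        have he : s(v0, w) ∈ G.edgeSet := hw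
        set e : G.edgeSet := ⟨s(v0, w), he⟩ with hedef
        have hev : (γ.mapEdgeSet e).1 = s(γ v0, γ w) := Sym2.map_pair_eq γ v0 w
        have hm : v0 ∈ e.1 := Sym2.mem_mk_left v0 w
        have h1 := hpres e
        rw [hpos e hm] at h1
        by_cases hm2 : v0 ∈ (γ.mapEdgeSet e).1
        · rw [hev, Sym2.mem_iff] at hm2
          rcases hm2 with h | h
          · exact absurd h.symm hne0
          · exact h.symm
        · rw [hneg _ hm2] at h1
          simp at h1
      exact hab (γ.injective ((key1 a hva).trans (key1 b hvb).symm))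
    -- step 2 : colour preservation at neighbours of v0
    have keyv0 : ∀ w : V, G.Adj v0 w → c (γ w) = c w := by
      intro w hw
      have he : s(v0, w) ∈ G.edgeSet := hw
      set e : G.edgeSet := ⟨s(v0, w), he⟩ with hedef
      have hev : (γ.mapEdgeSet e).1 = s(v0, γ w) := by
        have : (γ.mapEdgeSet e).1 = s(γ v0, γ w) := Sym2.map_pair_eq γ v0 w
        rwa [hγv0] at this
      have hm : v0 ∈ e.1 := Sym2.mem_mk_left v0 w
      have hm2 : v0 ∈ (γ.mapEdgeSet e).1 := by
        rw [hev]; exact Sym2.mem_mk_left _ _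
      have h1 := hpres e
      rw [hpos _ hm2, hpos _ hm] at h1
      have ho1 : Sym2.Mem.other hm = w := by
        have h2 : s(v0, Sym2.Mem.other hm) = s(v0, w) := Sym2.other_spec hm
        rwa [Sym2.congr_right] at h2
      have ho2 : Sym2.Mem.other hm2 = γ w := by
        have h2 : s(v0, Sym2.Mem.other hm2) = s(v0, γ w) :=
          (Sym2.other_spec hm2).trans hev
        rwa [Sym2.congr_right] at h2
      rw [ho1, ho2] at h1
      exact Sum.inl.inj h1
    -- step 3 : colour preservation propagates along edges
    have key : ∀ u v : V, G.Adj u v → c (γ u) = c u → c (γ v) = c v := by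
      intro u v huv hu
      by_cases hv0 : v = v0
      · rw [hv0, hγv0]
      by_cases hu0 : u = v0
      · exact keyv0 v (hu0 ▸ huv)
      · have he : s(u, v) ∈ G.edgeSet := huv
        set e : G.edgeSet := ⟨s(u, v), he⟩ with hedef
        have hev : (γ.mapEdgeSet e).1 = s(γ u, γ v) := Sym2.map_pair_eq γ u v
        have hm : v0 ∉ e.1 := by
          have : v0 ∉ s(u, v) := by
            rw [Sym2.mem_iff]
            push_neg
            exact ⟨fun h => hu0 h.symm, fun h => hv0 h.symm⟩
          exact this
        have hm2 : v0 ∉ (γ.mapEdgeSet e).1 := by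
          rw [hev, Sym2.mem_iff]
          push_neg
          constructor
          · intro h
            exact hu0 (γ.injective (h.symm.trans hγv0.symm))
          · intro h
            exact hv0 (γ.injective (h.symm.trans hγv0.symm))
        have h1 := hpres e
        rw [hneg _ hm2, hneg _ hm] at h1
        have h2 : Sym2.map c (γ.mapEdgeSet e).1 = Sym2.map c e.1 := Sum.inr.inj h1
        have h3 : s(c (γ u), c (γ v)) = s(c u, c v) := by
          have e1 : Sym2.map c (γ.mapEdgeSet e).1 = s(c (γ u), c (γ v)) := by
            rw [hev, Sym2.map_pair_eq]
          have e2 : Sym2.map c e.1 = s(c u, c v) := Sym2.map_pair_eq c u v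
          rw [← e1, ← e2]
          exact h2
        rw [Sym2.eq_iff] at h3
        rcases h3 with ⟨_, h⟩ | ⟨h4, h5⟩
        · exact h
        · rw [h5, ← h4, hu]
    -- step 4 : propagate from v0 along walks, conclude
    have hall : ∀ v : V, c (γ v) = c v := by
      have hstep : ∀ {p q : V} (_ : G.Walk p q), c (γ p) = c p → c (γ q) = c q := by
        intro p q w
        induction w with
        | nil => exact id
        | cons h t ih => exact fun hp => ih (key _ _ h hp)
      intro v
      exact hstep (hconn v0 v).some (by rw [hγv0])
    exact hdist γ hall
  -- cardinality bound : #C' ≤ #C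
  have hCinf : Cardinal.aleph0 ≤ #C := hC ▸ hinf
  have hSym2 : #(Sym2 C) ≤ #C * #C := by
    have hsurj : Function.Surjective (fun p : C × C => s(p.1, p.2)) := by
      intro z
      induction z with
      | _ x y => exact ⟨(x, y), rfl⟩
    calc #(Sym2 C) ≤ #(C × C) := Cardinal.mk_le_of_surjective hsurj
    _ = #C * #C := by simp [Cardinal.mk_prod]
  have hC'le : #C' ≤ #C := by
    rw [hC']
    calc #(C ⊕ Sym2 C) = #C + #(Sym2 C) := by
          simp [Cardinal.mk_sum]
    _ ≤ #C + #C * #C := by gcongr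
    _ = #C := by
          rw [Cardinal.mul_eq_self hCinf, Cardinal.add_eq_self hCinf]
  -- conclude
  calc distinguishingIndex G ≤ #C' := csInf_le' ⟨C', cE, rfl, hdistE⟩
  _ ≤ #C := hC'le
  _ = distinguishingNumber G := hC
end

section
/- Let G be a graph in which every non-trivial automorphism moves infinitely many edges, such that G has only finitely many vertices of infinite degree and the graph G_{¬∞} obtained from G by deleting all vertices of infinite degree has only finitely many non-singleton connected components and only finitely many edges. Then G_{¬∞} has only finitely many isolated vertices; equivalently, it is impossible that all but finitely many components of G_{¬∞} are singletons while G has infinite edge motion and finitely many infinite-degree vertices, since otherwise two vertices of G would have the same neighbourhood and their transposition would be a non-trivial automorphism moving only finitely many edges. -/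
/-!
Two distinct vertices of finite degree with the same neighbourhood are swapped by an automorphism
that moves only the finitely many edges at these two vertices, which infinite edge motion forbids.
A vertex isolated in `G_{¬∞}` has all its neighbours among the finitely many vertices of infinite
degree, so there are only finitely many possible neighbourhoods of such vertices, hence only
finitely many such vertices.
-/

namespace SimpleGraph

variable {V : Type*} {G : SimpleGraph V}

def HasInfiniteEdgeMotion (G : SimpleGraph V) : Prop :=
  ∀ γ : G ≃g G, (∃ v, γ v ≠ v) → {e : Sym2 V | e ∈ G.edgeSet ∧ e.map γ ≠ e}.Infinite

theorem finite_incidenceSet_of_finite_neighborSet {v : V} (h : (G.neighborSet v).Finite) :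
    (G.incidenceSet v).Finite := by
  classical
  have : Finite (G.neighborSet v) := h
  exact Set.finite_coe_iff.mp ((G.incidenceSetEquivNeighborSet v).finite_iff.mpr this)

theorem not_adj_of_neighborSet_eq {u w : V} (h : G.neighborSet u = G.neighborSet w) :
    ¬ G.Adj u w := fun huw =>
  G.loopless.irrefl w (show w ∈ G.neighborSet w from h ▸ huw)

theorem adj_swap_iff_of_neighborSet_eq [DecidableEq V] {u w : V}
    (h : G.neighborSet u = G.neighborSet w) {a b : V} :
    G.Adj (Equiv.swap u w a) (Equiv.swap u w b) ↔ G.Adj a b := by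
  have hN : ∀ x, G.Adj u x ↔ G.Adj w x := fun x => Set.ext_iff.mp h x
  have huw := not_adj_of_neighborSet_eq h
  simp only [Equiv.swap_apply_def]
  split_ifs <;> subst_vars <;> grind [G.adj_comm, G.loopless.irrefl]

def isoSwapOfNeighborSetEq [DecidableEq V] {u w : V} (h : G.neighborSet u = G.neighborSet w) :
    G ≃g G :=
  ⟨Equiv.swap u w, adj_swap_iff_of_neighborSet_eq h⟩

theorem Iso.setOf_map_ne_subset (γ : G ≃g G) :
    {e : Sym2 V | e ∈ G.edgeSet ∧ e.map γ ≠ e} ⊆ ⋃ v ∈ {v | γ v ≠ v}, G.incidenceSet v := by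
  rintro e ⟨he, hmoved⟩
  induction e with
  | _ a b =>
    by_contra hnot
    simp only [Set.mem_iUnion, Set.mem_ofPred_eq, not_exists, not_imp_not] at hnot
    refine hmoved ?_
    rw [Sym2.map_mk, hnot a ⟨he, Sym2.mem_mk_left a b⟩, hnot b ⟨he, Sym2.mem_mk_right a b⟩]

theorem HasInfiniteEdgeMotion.eq_of_neighborSet_eq (hG : G.HasInfiniteEdgeMotion) {u w : V}
    (hu : (G.neighborSet u).Finite) (hw : (G.neighborSet w).Finite)
    (h : G.neighborSet u = G.neighborSet w) : u = w := by
  classical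
  by_contra hne
  let γ := isoSwapOfNeighborSetEq h
  have hmoved_vertices : {v | γ v ≠ v} ⊆ {u, w} := fun v hv => by
    by_contra hvuw
    simp only [Set.mem_insert_iff, Set.mem_singleton_iff, not_or] at hvuw
    exact hv (Equiv.swap_apply_of_ne_of_ne hvuw.1 hvuw.2)
  have hfinite : (⋃ v ∈ {v | γ v ≠ v}, G.incidenceSet v).Finite :=
    ((Set.toFinite {u, w}).subset hmoved_vertices).biUnion fun v hv => by
      rcases hmoved_vertices hv with rfl | rfl
      exacts [finite_incidenceSet_of_finite_neighborSet hu,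
        finite_incidenceSet_of_finite_neighborSet hw]
  refine hG γ ⟨u, ?_⟩ (hfinite.subset γ.setOf_map_ne_subset)
  simpa [γ, isoSwapOfNeighborSetEq] using Ne.symm hne

end SimpleGraph

theorem stmt_9_general {V : Type} (G : SimpleGraph V)
    (hmotion : ∀ γ : G ≃g G, (∃ v, γ v ≠ v) →
      {e : Sym2 V | e ∈ G.edgeSet ∧ e.map γ ≠ e}.Infinite)
    (hinf : {v : V | (G.neighborSet v).Infinite}.Finite) :
    {w : {v : V | (G.neighborSet v).Finite} |
      ∀ u, ¬ (G.induce {v : V | (G.neighborSet v).Finite}).Adj w u}.Finite := by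
  have hmotion : G.HasInfiniteEdgeMotion := hmotion
  have hmaps : Set.MapsTo (fun w : {v : V | (G.neighborSet v).Finite} => G.neighborSet w)
      {w | ∀ u, ¬ (G.induce {v : V | (G.neighborSet v).Finite}).Adj w u}
      {N | N ⊆ {v : V | (G.neighborSet v).Infinite}} := fun w hw v hv =>
    Set.not_finite.mp fun hv_fin => hw ⟨v, hv_fin⟩ hv
  refine Set.Finite.of_injOn hmaps (fun u _ w _ h => ?_) hinf.finite_subsets
  exact Subtype.ext (hmotion.eq_of_neighborSet_eq u.2 w.2 h)

/-- Let `G` have infinite edge motion, only finitely many vertices of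
infinite degree, and suppose the subgraph `G_{¬∞}` induced by the finite-degree vertices
has only finitely many non-singleton connected components and only finitely many edges.
Then `G_{¬∞}` has only finitely many isolated vertices. -/
theorem stmt_9 {V : Type} (G : SimpleGraph V)
    (hmotion : ∀ γ : G ≃g G, (∃ v, γ v ≠ v) →
      {e : Sym2 V | e ∈ G.edgeSet ∧ e.map γ ≠ e}.Infinite)
    (hinf : {v : V | (G.neighborSet v).Infinite}.Finite)
    (hcomp : {c : (G.induce {v : V | (G.neighborSet v).Finite}).ConnectedComponent |
      ¬ c.supp.Subsingleton}.Finite)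
    (hedge : (G.induce {v : V | (G.neighborSet v).Finite}).edgeSet.Finite) :
    {w : {v : V | (G.neighborSet v).Finite} |
      ∀ u, ¬ (G.induce {v : V | (G.neighborSet v).Finite}).Adj w u}.Finite :=
  stmt_9_general G hmotion hinf
end
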